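/- arXiv:2201.00326 — 2 statements merged into one kernel-verified Lean document; each statement's English description precedes it below -/
import Mathlib

section
/- Let φ be a Schwartz function on ℝ whose Fourier transform φ̂ is supported in [−1, 1]. Then φ̂(0) − φ(0) + ∫_{-∞}^{∞} φ̂(x)|x| dx = ∫_{-∞}^{∞} φ(x) (1 − sin²(πx)/(πx)²) dx. -/
open Real Complex MeasureTheory FourierTransform Convolution

/-!
The tent `max 0 (1 - |ξ|)` is the autocorrelation of the box `𝟙[-1/2, 1/2]`, so its Fourier
transform is `sinc (π x) ^ 2`. Since `φ̂` is supported in `[-1, 1]`, where the tent equals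
`1 - |ξ|`, the multiplication formula `∫ φ̂ · tent = ∫ φ · 𝓕 tent` turns the right-hand side into
`∫ φ - ∫ φ̂ + ∫ φ̂ |ξ|`, and `∫ φ = φ̂ 0`, `∫ φ̂ = φ 0` (Fourier inversion at `0`).
-/

namespace Real

variable {V E : Type*} [NormedAddCommGroup V] [InnerProductSpace ℝ V] [FiniteDimensional ℝ V]
  [MeasurableSpace V] [BorelSpace V] [NormedAddCommGroup E] [NormedSpace ℂ E]

theorem fourier_apply_zero (f : V → E) : 𝓕 f 0 = ∫ v, f v := by
  simp [fourier_eq]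

theorem integral_fourier_eq_apply_zero [CompleteSpace E] {f : V → E} (hf : Integrable f)
    (h'f : Integrable (𝓕 f)) (h0 : ContinuousAt f 0) : ∫ ξ, 𝓕 f ξ = f 0 := by
  rw [← hf.fourierInv_fourier_eq h'f h0, fourierInv_eq]
  simp

theorem integral_fourier_mul_eq {f g : V → ℂ} (hf : Integrable f) (hg : Integrable g) :
    ∫ ξ, 𝓕 f ξ * g ξ = ∫ x, f x * 𝓕 g x := by
  have hflip : (innerₗ V).flip = innerₗ V := LinearMap.ext₂ fun x y ↦ real_inner_comm x y
  have h := VectorFourier.integral_fourierIntegral_smul_eq_flip (L := innerₗ V)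
    continuous_fourierChar continuous_inner hf hg
  rwa [hflip] at h

end Real

noncomputable def unitBox : ℝ → ℂ := Set.indicator (Set.Icc (-1 / 2) (1 / 2)) 1

noncomputable def tent (ξ : ℝ) : ℝ := max 0 (1 - |ξ|)

lemma integrable_unitBox : Integrable unitBox :=
  (integrable_indicator_iff measurableSet_Icc).2 (integrableOn_const measure_Icc_lt_top.ne)

lemma tent_eq_one_sub_abs {ξ : ℝ} (h : |ξ| ≤ 1) : tent ξ = 1 - |ξ| :=
  max_eq_right (by linarith)

lemma fourier_unitBox (x : ℝ) : 𝓕 unitBox x = sinc (π * x) := by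
  set c : ℂ := -2 * π * x * I
  have h : 𝓕 unitBox x = ∫ v in (-1 / 2 : ℝ)..(1 / 2), cexp (c * v) := by
    rw [fourier_real_eq_integral_exp_smul, unitBox, intervalIntegral.integral_of_le (by norm_num),
      ← integral_Icc_eq_integral_Ioc, ← integral_indicator measurableSet_Icc]
    congr 1 with v
    by_cases hv : v ∈ Set.Icc (-1 / 2 : ℝ) (1 / 2)
    · rw [Set.indicator_of_mem hv, Set.indicator_of_mem hv, Pi.one_apply, smul_eq_mul, mul_one]
      congr 1
      push_cast
      ring
    · rw [Set.indicator_of_notMem hv, Set.indicator_of_notMem hv, smul_zero]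
  rcases eq_or_ne x 0 with rfl | hx
  · simp [h, c]
    norm_num
  have hc : c ≠ 0 := by simp [c, hx, pi_ne_zero]
  have hhalf : c * ↑(1 / 2 : ℝ) = ↑(-(π * x)) * I := by simp [c]; ring
  have hhalf' : c * ↑(-1 / 2 : ℝ) = ↑(π * x) * I := by simp [c]; ring
  rw [h, integral_exp_mul_complex hc, sinc_of_ne_zero (by positivity), hhalf, hhalf', exp_mul_I,
    exp_mul_I, ← ofReal_cos, ← ofReal_sin, ← ofReal_cos, ← ofReal_sin, Real.cos_neg, Real.sin_neg]
  have hπ : (π : ℂ) ≠ 0 := ofReal_ne_zero.mpr pi_ne_zero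
  have hx' : (x : ℂ) ≠ 0 := ofReal_ne_zero.mpr hx
  simp only [c]
  push_cast
  field_simp
  ring

lemma unitBox_convolution_unitBox :
    unitBox ⋆[ContinuousLinearMap.mul ℂ ℂ] unitBox = fun x ↦ (tent x : ℂ) := by
  ext x
  have hprod : ∀ t, unitBox t * unitBox (x - t) =
      ((Set.Icc (max (-1 / 2) (x - 1 / 2)) (min (1 / 2) (x + 1 / 2))).indicator 1 t : ℝ) := by
    intro t
    simp only [unitBox, Set.indicator_apply, Set.mem_Icc, max_le_iff, le_min_iff, Pi.one_apply]
    split_ifs <;> norm_num <;> grind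
  simp only [convolution_def, ContinuousLinearMap.mul_apply', hprod]
  rw [integral_complex_ofReal, integral_indicator_one measurableSet_Icc, volume_real_Icc, tent,
    max_comm]
  congr 2
  rcases le_total 0 x with hx | hx
  · rw [abs_of_nonneg hx, max_eq_right (by linarith : (-1 / 2 : ℝ) ≤ x - 1 / 2),
      min_eq_left (by linarith : (1 / 2 : ℝ) ≤ x + 1 / 2)]
    ring
  · rw [abs_of_nonpos hx, max_eq_left (by linarith : x - 1 / 2 ≤ (-1 / 2 : ℝ)),
      min_eq_right (by linarith : x + 1 / 2 ≤ (1 / 2 : ℝ))]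
    ring

lemma fourier_tent (x : ℝ) : 𝓕 (fun ξ ↦ (tent ξ : ℂ)) x = (sinc (π * x) ^ 2 : ℝ) := by
  rw [← unitBox_convolution_unitBox,
    Real.fourier_mul_convolution_eq integrable_unitBox integrable_unitBox, fourier_unitBox]
  push_cast
  ring

lemma integrable_tent : Integrable fun ξ ↦ (tent ξ : ℂ) :=
  unitBox_convolution_unitBox ▸ integrable_unitBox.integrable_convolution _ integrable_unitBox

lemma integrable_mul_abs_of_support_subset_Icc {g : ℝ → ℂ} {R : ℝ} (hg : Integrable g)
    (hsupp : Function.support g ⊆ Set.Icc (-R) R) :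
    Integrable fun ξ ↦ g ξ * ((|ξ| : ℝ) : ℂ) := by
  refine (hg.norm.const_mul R).mono' (hg.aestronglyMeasurable.mul (by fun_prop))
    (.of_forall fun ξ ↦ ?_)
  by_cases hξ : g ξ = 0
  · simp [hξ]
  rw [norm_mul, norm_real, norm_abs_eq_norm, mul_comm]
  exact mul_le_mul_of_nonneg_right (abs_le.2 (hsupp hξ)) (norm_nonneg _)

theorem integral_mul_one_sub_sinc_sq {f : ℝ → ℂ} (hf : Integrable f) (h𝓕f : Integrable (𝓕 f))
    (h0 : ContinuousAt f 0) (hsupp : Function.support (𝓕 f) ⊆ Set.Icc (-1) 1) :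
    ∫ x, f x * (1 - sinc (π * x) ^ 2 : ℝ) = 𝓕 f 0 - f 0 + ∫ ξ, 𝓕 f ξ * ((|ξ| : ℝ) : ℂ) := by
  have hsinc : Integrable fun x ↦ f x * (sinc (π * x) ^ 2 : ℝ) := by
    refine hf.mul_bdd (c := 1) (by fun_prop) (.of_forall fun x ↦ ?_)
    rw [norm_real, norm_pow, Real.norm_eq_abs]
    exact pow_le_one₀ (abs_nonneg _) (abs_sinc_le_one _)
  have htent : ∫ ξ, 𝓕 f ξ * (tent ξ : ℂ) = (∫ ξ, 𝓕 f ξ) - ∫ ξ, 𝓕 f ξ * ((|ξ| : ℝ) : ℂ) := by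
    rw [← integral_sub h𝓕f (integrable_mul_abs_of_support_subset_Icc h𝓕f hsupp)]
    congr 1 with ξ
    by_cases hξ : 𝓕 f ξ = 0
    · simp [hξ]
    rw [tent_eq_one_sub_abs (abs_le.2 (hsupp hξ))]
    push_cast
    ring
  calc ∫ x, f x * (1 - sinc (π * x) ^ 2 : ℝ)
      = (∫ x, f x) - ∫ x, f x * 𝓕 (fun ξ ↦ (tent ξ : ℂ)) x := by
        rw [← integral_sub hf (by simpa only [fourier_tent] using hsinc)]
        congr 1 with x
        rw [fourier_tent]
        push_cast
        ring
    _ = 𝓕 f 0 - ∫ ξ, 𝓕 f ξ * (tent ξ : ℂ) := by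
        rw [Real.fourier_apply_zero, Real.integral_fourier_mul_eq hf integrable_tent]
    _ = 𝓕 f 0 - f 0 + ∫ ξ, 𝓕 f ξ * ((|ξ| : ℝ) : ℂ) := by
        rw [htent, Real.integral_fourier_eq_apply_zero hf h𝓕f h0]
        ring

/-- For a Schwartz function `φ` with `supp φ̂ ⊆ [-1,1]`,
`φ̂(0) − φ(0) + ∫ φ̂(x)|x| dx = ∫ φ(x)(1 − sin²(πx)/(πx)²) dx`. -/
theorem weighted_density_identity (φ : SchwartzMap ℝ ℂ)
    (hsupp : Function.support (FourierTransform.fourier (⇑φ : ℝ → ℂ)) ⊆ Set.Icc (-1 : ℝ) 1) :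
    FourierTransform.fourier (⇑φ : ℝ → ℂ) 0 - φ 0
        + ∫ x : ℝ, FourierTransform.fourier (⇑φ : ℝ → ℂ) x * ((|x| : ℝ) : ℂ)
      = ∫ x : ℝ, φ x * ((1 - Real.sin (π * x) ^ 2 / (π * x) ^ 2 : ℝ) : ℂ) := by
  -- `sin² (π x) / (π x) ^ 2` is the junk value `0` at `x = 0`, where `sinc (π x) ^ 2 = 1`.
  have hsinc : ∀ᵐ x : ℝ, sinc (π * x) ^ 2 = Real.sin (π * x) ^ 2 / (π * x) ^ 2 := by
    filter_upwards [Measure.ae_ne volume 0] with x hx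
    rw [sinc_of_ne_zero (by positivity), div_pow]
  rw [← integral_mul_one_sub_sinc_sq φ.integrable (SchwartzMap.fourier_coe φ ▸ (𝓕 φ).integrable)
    φ.continuous.continuousAt hsupp]
  refine integral_congr_ae ?_
  filter_upwards [hsinc] with x hx
  rw [hx]
end

section
/- Let φ be a Schwartz function on ℝ whose Fourier transform is supported in [−α, α] for some α > 0. Then for any real a > −1, ∑_p p^a · φ̂(log p / log q) · log p = O(q^{α(a+1)}) as q → ∞, where the sum is over all primes p. -/
open Filter MeasureTheory

/-! Since `φ̂` vanishes outside `[-α, α]`, only the primes `p ≤ q ^ α` contribute, and each term is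
at most `‖φ‖₁ p ^ a log p`. So it suffices that `∑_{p ≤ N} p ^ a log p = O(N ^ (a + 1))`. On a
dyadic block `N/2 < p ≤ N` the weight `p ^ a` is within a factor `2 ^ |a|` of `N ^ a`, and
Chebyshev's bound `θ N ≤ N log 4` controls the logarithms, so the block contributes
`O(N ^ (a + 1))`; as `a + 1 > 0`, these contributions add up geometrically. -/

open Real Finset

theorem le_div_one_sub_two_rpow_mul_rpow_of_le_half_add {f : ℕ → ℝ} {b D : ℝ} (hb : 0 < b)
    (hD : 0 ≤ D) (h0 : f 0 ≤ 0) (hrec : ∀ N, 0 < N → f N ≤ f (N / 2) + D * N ^ b) (N : ℕ) :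
    f N ≤ D / (1 - 2 ^ (-b)) * N ^ b := by
  set C := D / (1 - 2 ^ (-b))
  have hr : (2 : ℝ) ^ (-b) < 1 := rpow_lt_one_of_one_lt_of_neg one_lt_two (by linarith)
  have hC : 0 ≤ C := div_nonneg hD (by linarith)
  -- `C` is the fixed point of `x ↦ 2 ^ (-b) * x + D`.
  have hCfix : C * 2 ^ (-b) + D = C := by
    have : C * (1 - 2 ^ (-b)) = D := div_mul_cancel₀ D (by linarith)
    linarith
  induction N using Nat.strong_induction_on with
  | _ N ih =>
    rcases Nat.eq_zero_or_pos N with rfl | hN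
    · simpa [zero_rpow hb.ne'] using h0
    have hhalf : ((N / 2 : ℕ) : ℝ) ^ b ≤ 2 ^ (-b) * N ^ b := by
      calc ((N / 2 : ℕ) : ℝ) ^ b ≤ ((N : ℝ) / 2) ^ b := by
            gcongr; exact Nat.cast_div_le
        _ = 2 ^ (-b) * N ^ b := by
            rw [div_rpow (Nat.cast_nonneg N) zero_le_two, rpow_neg zero_le_two]; ring
    calc f N ≤ C * ((N / 2 : ℕ) : ℝ) ^ b + D * N ^ b :=
          (hrec N hN).trans (by gcongr; exact ih _ (Nat.div_lt_self hN one_lt_two))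
      _ ≤ C * (2 ^ (-b) * N ^ b) + D * N ^ b := by gcongr
      _ = (C * 2 ^ (-b) + D) * N ^ b := by ring
      _ = C * N ^ b := by rw [hCfix]

theorem rpow_le_two_rpow_abs_mul_rpow {x y : ℝ} (a : ℝ) (hx : 0 < x) (hxy : x ≤ y)
    (hyx : y ≤ 2 * x) : x ^ a ≤ 2 ^ |a| * y ^ a := by
  rcases le_or_gt 0 a with ha | ha
  · calc x ^ a ≤ y ^ a := rpow_le_rpow hx.le hxy ha
      _ ≤ 2 ^ |a| * y ^ a :=
          le_mul_of_one_le_left (rpow_nonneg (hx.le.trans hxy) a)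
            (one_le_rpow one_le_two (abs_nonneg a))
  · calc x ^ a ≤ (y / 2) ^ a := rpow_le_rpow_of_nonpos (by linarith) (by linarith) ha.le
      _ = 2 ^ |a| * y ^ a := by
          rw [div_rpow (by linarith) zero_le_two, abs_of_neg ha, rpow_neg zero_le_two]; ring

theorem sum_primesLE_sdiff_half_rpow_mul_log_le (a : ℝ) {N : ℕ} (hN : 0 < N) :
    ∑ p ∈ Nat.primesLE N \ Nat.primesLE (N / 2), (p : ℝ) ^ a * log p
      ≤ 2 ^ |a| * log 4 * N ^ (a + 1) := by
  have hterm : ∀ p ∈ Nat.primesLE N \ Nat.primesLE (N / 2),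
      (p : ℝ) ^ a * log p ≤ 2 ^ |a| * N ^ a * log p := by
    intro p hp
    simp only [Finset.mem_sdiff, Nat.mem_primesLE, not_and] at hp
    obtain ⟨⟨hpN, hp⟩, hp_not_le_half⟩ := hp
    have hNp : N ≤ 2 * p := by
      by_contra! h
      exact hp_not_le_half (by omega) hp
    gcongr
    exact rpow_le_two_rpow_abs_mul_rpow a (by exact_mod_cast hp.pos) (by exact_mod_cast hpN)
      (by exact_mod_cast hNp)
  calc ∑ p ∈ Nat.primesLE N \ Nat.primesLE (N / 2), (p : ℝ) ^ a * log p
      ≤ 2 ^ |a| * N ^ a * ∑ p ∈ Nat.primesLE N \ Nat.primesLE (N / 2), log p := by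
        rw [mul_sum]; exact sum_le_sum hterm
    _ ≤ 2 ^ |a| * N ^ a * Chebyshev.theta N := by
        rw [Chebyshev.theta_eq_sum_primesLE_log]
        gcongr
        exact sdiff_subset
    _ ≤ 2 ^ |a| * N ^ a * (log 4 * N) := by
        gcongr; exact Chebyshev.theta_le_log4_mul_x (Nat.cast_nonneg N)
    _ = 2 ^ |a| * log 4 * N ^ (a + 1) := by
        rw [rpow_add_one (by exact_mod_cast hN.ne')]; ring

theorem exists_sum_primesLE_rpow_mul_log_le {a : ℝ} (ha : -1 < a) :
    ∃ C, 0 ≤ C ∧ ∀ N : ℕ, ∑ p ∈ Nat.primesLE N, (p : ℝ) ^ a * log p ≤ C * N ^ (a + 1) := by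
  have hD : 0 ≤ 2 ^ |a| * log 4 := by positivity
  refine ⟨_, div_nonneg hD (sub_nonneg.2 (rpow_le_one_of_one_le_of_nonpos one_le_two
    (by linarith))), le_div_one_sub_two_rpow_mul_rpow_of_le_half_add (by linarith) hD
    (by simp) fun N hN => ?_⟩
  rw [← sum_sdiff (Nat.primesLE_mono (Nat.div_le_self N 2)), add_comm]
  gcongr
  exact sum_primesLE_sdiff_half_rpow_mul_log_le a hN

theorem apply_log_div_log_eq_zero {E : Type*} [Zero E] {g : ℝ → E} {α q x : ℝ}
    (hsupp : Function.support g ⊆ Set.Icc (-α) α) (hq : 1 < q) (hx : q ^ α < x) :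
    g (log x / log q) = 0 := by
  have hq0 : 0 < q := by linarith
  have hlt : α < log x / log q := by
    rw [lt_div_iff₀ (log_pos hq), ← log_rpow hq0]
    exact log_lt_log (rpow_pos_of_pos hq0 α) hx
  exact Function.notMem_support.1 fun h => (hsupp h).2.not_gt hlt

theorem tsum_primes_eq_sum_primesLE {E : Type*} [AddCommMonoid E] [TopologicalSpace E]
    {F : ℕ → E} {N : ℕ} (hF : ∀ p : ℕ, p.Prime → N < p → F p = 0) :
    ∑' p : Nat.Primes, F p = ∑ p ∈ Nat.primesLE N, F p := by
  let s : Finset Nat.Primes := (Nat.primesLE N).subtype Nat.Prime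
  rw [tsum_eq_sum (s := s) fun p hp => hF p p.2 ?_]
  · exact sum_subtype_of_mem F fun p hp => (Nat.mem_primesLE.1 hp).2
  · by_contra! hpN
    exact hp (mem_subtype.2 (Nat.mem_primesLE.2 ⟨hpN, p.2⟩))

theorem norm_tsum_primes_rpow_mul_apply_log_div_log_le {g : ℝ → ℂ} {α a q B : ℝ}
    (hg : ∀ w, ‖g w‖ ≤ B) (hsupp : Function.support g ⊆ Set.Icc (-α) α) (hq : 1 < q) :
    ‖∑' p : Nat.Primes, (((p : ℝ) ^ a : ℝ) : ℂ) * g (log p / log q) * ((log p : ℝ) : ℂ)‖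
      ≤ B * ∑ p ∈ Nat.primesLE ⌊q ^ α⌋₊, (p : ℝ) ^ a * log p := by
  rw [tsum_primes_eq_sum_primesLE (F := fun p : ℕ => (((p : ℝ) ^ a : ℝ) : ℂ) *
    g (log p / log q) * ((log p : ℝ) : ℂ)) fun p _ hp => ?_, mul_sum]
  · refine norm_sum_le_of_le _ fun p hp => ?_
    have hp1 : (1 : ℝ) ≤ p := by exact_mod_cast (Nat.mem_primesLE.1 hp).2.one_le
    rw [norm_mul, norm_mul, Complex.norm_real, Complex.norm_real, norm_of_nonneg (by positivity),
      norm_of_nonneg (log_nonneg hp1)]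
    calc (p : ℝ) ^ a * ‖g (log p / log q)‖ * log p ≤ (p : ℝ) ^ a * B * log p := by
          gcongr; exact hg _
      _ = B * ((p : ℝ) ^ a * log p) := by ring
  · rw [apply_log_div_log_eq_zero hsupp hq ((Nat.floor_lt (by positivity)).1 hp), mul_zero,
      zero_mul]

theorem prime_sum_fourier_bigO_general (φ : SchwartzMap ℝ ℂ) (α : ℝ)
    (hsupp : Function.support (FourierTransform.fourier (⇑φ : ℝ → ℂ)) ⊆ Set.Icc (-α) α)
    (a : ℝ) (ha : a > -1) :
    (fun q : ℝ =>
        ∑' p : Nat.Primes,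
          ((p : ℝ) ^ a : ℝ) * FourierTransform.fourier (⇑φ : ℝ → ℂ) (Real.log p / Real.log q)
            * ((Real.log p : ℝ) : ℂ))
      =O[atTop] fun q : ℝ => q ^ (α * (a + 1)) := by
  obtain ⟨C, hC, hsum⟩ := exists_sum_primesLE_rpow_mul_log_le ha
  set B := ∫ x, ‖φ x‖
  have hB : ∀ w, ‖FourierTransform.fourier (⇑φ : ℝ → ℂ) w‖ ≤ B := fun _ =>
    VectorFourier.norm_fourierIntegral_le_integral_norm _ _ _ _ _
  have hB0 : 0 ≤ B := integral_nonneg fun _ => norm_nonneg _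
  refine Asymptotics.IsBigO.of_bound (B * C) ?_
  filter_upwards [eventually_gt_atTop 1] with q hq
  have hq0 : 0 ≤ q := by linarith
  calc _ ≤ B * ∑ p ∈ Nat.primesLE ⌊q ^ α⌋₊, (p : ℝ) ^ a * log p :=
        norm_tsum_primes_rpow_mul_apply_log_div_log_le hB hsupp hq
    _ ≤ B * (C * (⌊q ^ α⌋₊ : ℝ) ^ (a + 1)) := by
        gcongr; exact hsum _
    _ ≤ B * (C * (q ^ α) ^ (a + 1)) := by
        gcongr
        · linarith
        · exact Nat.floor_le (by positivity)
    _ = B * C * ‖q ^ (α * (a + 1))‖ := by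
        rw [norm_of_nonneg (by positivity), rpow_mul hq0]; ring

/-- For a Schwartz function `φ` with `supp φ̂ ⊆ [-α, α]` and `a > -1`,
`∑_p p^a φ̂(log p / log q) log p = O(q^{α(a+1)})` as `q → ∞`. -/
theorem prime_sum_fourier_bigO (φ : SchwartzMap ℝ ℂ) (α : ℝ) (hα : 0 < α)
    (hsupp : Function.support (FourierTransform.fourier (⇑φ : ℝ → ℂ)) ⊆ Set.Icc (-α) α)
    (a : ℝ) (ha : a > -1) :
    (fun q : ℝ =>
        ∑' p : Nat.Primes,
          ((p : ℝ) ^ a : ℝ) * FourierTransform.fourier (⇑φ : ℝ → ℂ) (Real.log p / Real.log q)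
            * ((Real.log p : ℝ) : ℂ))
      =O[atTop] fun q : ℝ => q ^ (α * (a + 1)) :=
  prime_sum_fourier_bigO_general φ α hsupp a ha
end
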